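/- Take c = 2 in the context and assume φ has the elementarily normalized class-II form: φ₁(z, conj z, u₁, u₂) = z·conj z·(1 + ρ₁) and φ₂(z, conj z, u₁, u₂) = z²·conj z + z·(conj z)² + z·conj z·ρ₂, where ρ₁, ρ₂ are real-valued real-analytic functions of (z, conj z, u₁, u₂) with ρ_j(0) = 0 and ∂ρ_j/∂z(0) = ∂ρ_j/∂z̄(0) = 0 for j = 1, 2. Then A(0) = 0 (so that L|₀ = ∂/∂z|₀ and L̄|₀ = ∂/∂z̄|₀), (B₁(0), B₂(0)) = (−2i, 0), and (M₁(0), M₂(0)) = (0, −4i); that is, [L, L̄]|₀ = −2i·∂/∂u₁|₀ and [L, [L, L̄]]|₀ = −4i·∂/∂u₂|₀. -/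

import Mathlib

/-!
Near the origin `φⱼ = z·z̄·rⱼ` with `r = (1 + ρ₁, z + z̄ + ρ₂)`. Then `φ_z = z̄·∂_z(z r)` and
`φ_u = z·z̄·∂_u r`, so `A = z̄·G` with `G = -(i + φ_u)⁻¹ ∂_z(z r)` real-analytic; since `i + φ_u`
is stationary at `0`, `G(0) = i·r(0)`, `∂_z G(0) = 2i·∂_z r(0)` and `∂_z̄ G(0) = i·∂_z̄ r(0)`.
Whenever `A = z̄·G`, both `A` and `∂_u A` vanish at `0`, so there the coefficients reduce to
Wirtinger derivatives: `B(0) = conj G(0) − G(0)` and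
`M(0) = ∂_z B(0) = 2·conj(∂_z̄ G(0)) − ∂_z G(0)`.
-/

open Complex Filter Topology ComplexConjugate

noncomputable section

variable {c : ℕ}

/-- Wirtinger derivative `∂/∂z` of a function of `(z, u) ∈ ℂ × ℝ^c`. -/
def dZ (f : ℂ × (Fin c → ℝ) → ℂ) (p : ℂ × (Fin c → ℝ)) : ℂ :=
  (fderiv ℝ f p (1, 0) - Complex.I * fderiv ℝ f p (Complex.I, 0)) / 2

/-- Wirtinger derivative `∂/∂z̄` of a function of `(z, u) ∈ ℂ × ℝ^c`. -/
def dZbar (f : ℂ × (Fin c → ℝ) → ℂ) (p : ℂ × (Fin c → ℝ)) : ℂ :=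
  (fderiv ℝ f p (1, 0) + Complex.I * fderiv ℝ f p (Complex.I, 0)) / 2

/-- Derivative `∂/∂u_j` of a function of `(z, u) ∈ ℂ × ℝ^c`. -/
def dU (j : Fin c) (f : ℂ × (Fin c → ℝ) → ℂ) (p : ℂ × (Fin c → ℝ)) : ℂ :=
  fderiv ℝ f p (0, Pi.single j 1)

/-- The coefficient vector `A := −(i·I_c + φ_u)⁻¹·φ_z` of the CR vector field `L`,
for a real defining map `φ(z, conj z, u)` of a CR-generic graph in `ℂ^{1+c}`. -/
def coefA (φ : ℂ × (Fin c → ℝ) → (Fin c → ℝ)) (p : ℂ × (Fin c → ℝ)) : Fin c → ℂ :=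
  -(Matrix.mulVec
      (Complex.I • (1 : Matrix (Fin c) (Fin c) ℂ) +
        Matrix.of fun j k => dU k (fun q => ((φ q j : ℝ) : ℂ)) p)⁻¹
      (fun j => dZ (fun q => ((φ q j : ℝ) : ℂ)) p))

/-- The CR vector field `L = ∂/∂z + Σ_j A_j·∂/∂u_j`. -/
def opL (φ : ℂ × (Fin c → ℝ) → (Fin c → ℝ)) (f : ℂ × (Fin c → ℝ) → ℂ)
    (p : ℂ × (Fin c → ℝ)) : ℂ :=
  dZ f p + ∑ j, coefA φ p j * dU j f p

/-- The conjugate CR vector field `L̄ = ∂/∂z̄ + Σ_j conj(A_j)·∂/∂u_j`. -/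
def opLbar (φ : ℂ × (Fin c → ℝ) → (Fin c → ℝ)) (f : ℂ × (Fin c → ℝ) → ℂ)
    (p : ℂ × (Fin c → ℝ)) : ℂ :=
  dZbar f p + ∑ j, conj (coefA φ p j) * dU j f p

/-- `B_j := L(conj A_j) − L̄(A_j)`, the `∂/∂u_j`-coefficient of `[L, L̄]`. -/
def coefB (φ : ℂ × (Fin c → ℝ) → (Fin c → ℝ)) (j : Fin c) (p : ℂ × (Fin c → ℝ)) : ℂ :=
  opL φ (fun q => conj (coefA φ q j)) p - opLbar φ (fun q => coefA φ q j) p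

/-- `M_j := L(B_j) − Σ_k B_k·∂A_j/∂u_k`, the `∂/∂u_j`-coefficient of `[L, [L, L̄]]`. -/
def coefM (φ : ℂ × (Fin c → ℝ) → (Fin c → ℝ)) (j : Fin c) (p : ℂ × (Fin c → ℝ)) : ℂ :=
  opL φ (coefB φ j) p - ∑ k, coefB φ k p * dU k (fun q => coefA φ q j) p

/-- `N_j := L̄(B_j) − Σ_k B_k·∂(conj A_j)/∂u_k`, the `∂/∂u_j`-coefficient of
`[L̄, [L, L̄]]`. -/
def coefN (φ : ℂ × (Fin c → ℝ) → (Fin c → ℝ)) (j : Fin c) (p : ℂ × (Fin c → ℝ)) : ℂ :=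
  opLbar φ (coefB φ j) p - ∑ k, coefB φ k p * dU k (fun q => conj (coefA φ q j)) p

/-- `P_j := L(M_j) − Σ_k M_k·∂A_j/∂u_k`, the `∂/∂u_j`-coefficient of
`[L, [L, [L, L̄]]]`. -/
def coefP (φ : ℂ × (Fin c → ℝ) → (Fin c → ℝ)) (j : Fin c) (p : ℂ × (Fin c → ℝ)) : ℂ :=
  opL φ (coefM φ j) p - ∑ k, coefM φ k p * dU k (fun q => coefA φ q j) p

section Wirtinger

variable {f g : ℂ × (Fin c → ℝ) → ℂ} {p : ℂ × (Fin c → ℝ)}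

lemma dZ_congr (h : f =ᶠ[𝓝 p] g) : dZ f p = dZ g p := by
  rw [dZ, dZ, h.fderiv_eq]

lemma dZbar_congr (h : f =ᶠ[𝓝 p] g) : dZbar f p = dZbar g p := by
  rw [dZbar, dZbar, h.fderiv_eq]

lemma dU_congr (j : Fin c) (h : f =ᶠ[𝓝 p] g) : dU j f p = dU j g p := by
  rw [dU, dU, h.fderiv_eq]

lemma Filter.EventuallyEq.dZ (h : f =ᶠ[𝓝 p] g) : dZ f =ᶠ[𝓝 p] dZ g :=
  (h.fderiv (𝕜 := ℝ)).mono fun q hq => by rw [_root_.dZ, _root_.dZ, hq]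

lemma Filter.EventuallyEq.dZbar (h : f =ᶠ[𝓝 p] g) : dZbar f =ᶠ[𝓝 p] dZbar g :=
  (h.fderiv (𝕜 := ℝ)).mono fun q hq => by rw [_root_.dZbar, _root_.dZbar, hq]

lemma dZ_add (hf : DifferentiableAt ℝ f p) (hg : DifferentiableAt ℝ g p) :
    dZ (fun q => f q + g q) p = dZ f p + dZ g p := by
  simp only [dZ, fderiv_fun_add hf hg, add_apply]; ring

lemma dZbar_add (hf : DifferentiableAt ℝ f p) (hg : DifferentiableAt ℝ g p) :
    dZbar (fun q => f q + g q) p = dZbar f p + dZbar g p := by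
  simp only [dZbar, fderiv_fun_add hf hg, add_apply]; ring

lemma dZ_sub (hf : DifferentiableAt ℝ f p) (hg : DifferentiableAt ℝ g p) :
    dZ (fun q => f q - g q) p = dZ f p - dZ g p := by
  simp only [dZ, fderiv_fun_sub hf hg, sub_apply]; ring

lemma dZ_neg : dZ (fun q => -f q) p = -dZ f p := by
  simp only [dZ, fderiv_fun_neg, neg_apply]; ring

lemma dZbar_neg : dZbar (fun q => -f q) p = -dZbar f p := by
  simp only [dZbar, fderiv_fun_neg, neg_apply]; ring

lemma dZ_sum {ι : Type*} (s : Finset ι) {F : ι → ℂ × (Fin c → ℝ) → ℂ}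
    (hF : ∀ i ∈ s, DifferentiableAt ℝ (F i) p) :
    dZ (fun q => ∑ i ∈ s, F i q) p = ∑ i ∈ s, dZ (F i) p := by
  simp only [dZ, fderiv_fun_sum hF, sum_apply, ← Finset.sum_div,
    Finset.mul_sum, Finset.sum_sub_distrib]

lemma dZ_mul (hf : DifferentiableAt ℝ f p) (hg : DifferentiableAt ℝ g p) :
    dZ (fun q => f q * g q) p = dZ f p * g p + f p * dZ g p := by
  simp only [dZ, fderiv_fun_mul hf hg, add_apply, smul_apply, smul_eq_mul]; ring

lemma dZbar_mul (hf : DifferentiableAt ℝ f p) (hg : DifferentiableAt ℝ g p) :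
    dZbar (fun q => f q * g q) p = dZbar f p * g p + f p * dZbar g p := by
  simp only [dZbar, fderiv_fun_mul hf hg, add_apply, smul_apply, smul_eq_mul]; ring

lemma dU_mul (j : Fin c) (hf : DifferentiableAt ℝ f p) (hg : DifferentiableAt ℝ g p) :
    dU j (fun q => f q * g q) p = dU j f p * g p + f p * dU j g p := by
  simp only [dU, fderiv_fun_mul hf hg, add_apply, smul_apply, smul_eq_mul]; ring

lemma fderiv_conj_apply (hf : DifferentiableAt ℝ f p) (v : ℂ × (Fin c → ℝ)) :
    fderiv ℝ (fun q => conj (f q)) p v = conj (fderiv ℝ f p v) := by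
  have h : HasFDerivAt (fun q => conj (f q))
      (conjCLE.toContinuousLinearMap.comp (fderiv ℝ f p)) p :=
    conjCLE.toContinuousLinearMap.hasFDerivAt.comp p hf.hasFDerivAt
  rw [h.fderiv]; rfl

lemma dZ_conj (hf : DifferentiableAt ℝ f p) : dZ (fun q => conj (f q)) p = conj (dZbar f p) := by
  simp only [dZ, dZbar, fderiv_conj_apply hf, map_div₀, map_add, map_mul, conj_I, map_ofNat]
  ring

lemma dU_conj (j : Fin c) (hf : DifferentiableAt ℝ f p) :
    dU j (fun q => conj (f q)) p = conj (dU j f p) :=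
  fderiv_conj_apply hf _

lemma fderiv_ofReal_apply {ρ : ℂ × (Fin c → ℝ) → ℝ} (hρ : DifferentiableAt ℝ ρ p)
    (v : ℂ × (Fin c → ℝ)) : fderiv ℝ (fun q => (ρ q : ℂ)) p v = fderiv ℝ ρ p v := by
  have h : HasFDerivAt (fun q => (ρ q : ℂ)) (ofRealCLM.comp (fderiv ℝ ρ p)) p :=
    ofRealCLM.hasFDerivAt.comp p hρ.hasFDerivAt
  rw [h.fderiv]; rfl

lemma dZ_ofReal_eq_zero {ρ : ℂ × (Fin c → ℝ) → ℝ} (hρ : DifferentiableAt ℝ ρ p)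
    (h1 : fderiv ℝ ρ p (1, 0) = 0) (hI : fderiv ℝ ρ p (I, 0) = 0) :
    dZ (fun q => (ρ q : ℂ)) p = 0 := by
  simp [dZ, fderiv_ofReal_apply hρ, h1, hI]

lemma dZbar_ofReal_eq_zero {ρ : ℂ × (Fin c → ℝ) → ℝ} (hρ : DifferentiableAt ℝ ρ p)
    (h1 : fderiv ℝ ρ p (1, 0) = 0) (hI : fderiv ℝ ρ p (I, 0) = 0) :
    dZbar (fun q => (ρ q : ℂ)) p = 0 := by
  simp [dZbar, fderiv_ofReal_apply hρ, h1, hI]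

@[simp] lemma dZ_const (a : ℂ) : dZ (fun _ : ℂ × (Fin c → ℝ) => a) p = 0 := by
  simp [dZ]

@[simp] lemma dZbar_const (a : ℂ) : dZbar (fun _ : ℂ × (Fin c → ℝ) => a) p = 0 := by
  simp [dZbar]

lemma fderiv_fst_apply (v : ℂ × (Fin c → ℝ)) :
    fderiv ℝ (fun q : ℂ × (Fin c → ℝ) => q.1) p v = v.1 := by
  rw [fderiv_fst]; rfl

lemma fderiv_conj_fst_apply (v : ℂ × (Fin c → ℝ)) :
    fderiv ℝ (fun q : ℂ × (Fin c → ℝ) => conj q.1) p v = conj v.1 := by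
  rw [fderiv_conj_apply differentiableAt_fst, fderiv_fst_apply]

@[simp] lemma dZ_fst : dZ (fun q : ℂ × (Fin c → ℝ) => q.1) p = 1 := by
  simp [dZ, fderiv_fst_apply]

@[simp] lemma dZbar_fst : dZbar (fun q : ℂ × (Fin c → ℝ) => q.1) p = 0 := by
  simp [dZbar, fderiv_fst_apply]

@[simp] lemma dU_fst (j : Fin c) : dU j (fun q : ℂ × (Fin c → ℝ) => q.1) p = 0 := by
  simp [dU, fderiv_fst_apply]

@[simp] lemma dZ_conj_fst : dZ (fun q : ℂ × (Fin c → ℝ) => conj q.1) p = 0 := by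
  simp [dZ, fderiv_conj_fst_apply]

@[simp] lemma dZbar_conj_fst : dZbar (fun q : ℂ × (Fin c → ℝ) => conj q.1) p = 1 := by
  simp [dZbar, fderiv_conj_fst_apply]

@[simp] lemma dU_conj_fst (j : Fin c) :
    dU j (fun q : ℂ × (Fin c → ℝ) => conj q.1) p = 0 := by
  simp [dU, fderiv_conj_fst_apply]

end Wirtinger

section FstMul

variable {g : ℂ × (Fin c → ℝ) → ℂ} {p : ℂ × (Fin c → ℝ)}

lemma differentiableAt_conj_fst :
    DifferentiableAt ℝ (fun q : ℂ × (Fin c → ℝ) => conj q.1) p :=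
  differentiableAt_fst.star

lemma dZ_fst_mul (hg : DifferentiableAt ℝ g p) :
    dZ (fun q => q.1 * g q) p = g p + p.1 * dZ g p := by
  simp [dZ_mul differentiableAt_fst hg]

lemma dZbar_fst_mul (hg : DifferentiableAt ℝ g p) :
    dZbar (fun q => q.1 * g q) p = p.1 * dZbar g p := by
  simp [dZbar_mul differentiableAt_fst hg]

lemma dZ_conj_fst_mul (hg : DifferentiableAt ℝ g p) :
    dZ (fun q => conj q.1 * g q) p = conj p.1 * dZ g p := by
  simp [dZ_mul differentiableAt_conj_fst hg]

lemma dZbar_conj_fst_mul (hg : DifferentiableAt ℝ g p) :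
    dZbar (fun q => conj q.1 * g q) p = g p + conj p.1 * dZbar g p := by
  simp [dZbar_mul differentiableAt_conj_fst hg]

lemma dU_conj_fst_mul (j : Fin c) (hg : DifferentiableAt ℝ g p) :
    dU j (fun q => conj q.1 * g q) p = conj p.1 * dU j g p := by
  simp [dU_mul j differentiableAt_conj_fst hg]

lemma dZ_fst_mul_eventuallyEq (hg : AnalyticAt ℝ g p) :
    dZ (fun q => q.1 * g q) =ᶠ[𝓝 p] fun q => g q + q.1 * dZ g q :=
  hg.eventually_analyticAt.mono fun _ hq => dZ_fst_mul hq.differentiableAt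

lemma dZbar_conj_fst_mul_eventuallyEq (hg : AnalyticAt ℝ g p) :
    dZbar (fun q => conj q.1 * g q) =ᶠ[𝓝 p] fun q => g q + conj q.1 * dZbar g q :=
  hg.eventually_analyticAt.mono fun _ hq => dZbar_conj_fst_mul hq.differentiableAt

lemma dU_fst_mul_conj_fst_mul (j : Fin c) (hg : DifferentiableAt ℝ g p) :
    dU j (fun q => q.1 * conj q.1 * g q) p = p.1 * conj p.1 * dU j g p := by
  simp [dU_mul j (differentiableAt_fst.fun_mul differentiableAt_conj_fst) hg,
    dU_mul j differentiableAt_fst differentiableAt_conj_fst]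

lemma fderiv_fst_mul_conj_fst_mul_zero (hg : DifferentiableAt ℝ g 0) :
    fderiv ℝ (fun q : ℂ × (Fin c → ℝ) => q.1 * conj q.1 * g q) 0 = 0 := by
  have hz : DifferentiableAt ℝ (fun q : ℂ × (Fin c → ℝ) => q.1) 0 := differentiableAt_fst
  rw [fderiv_fun_mul (hz.fun_mul differentiableAt_conj_fst) hg,
    fderiv_fun_mul hz differentiableAt_conj_fst]
  ext v <;> simp

end FstMul

section Analytic

variable {E : Type*} [NormedAddCommGroup E] [NormedSpace ℝ E] {f : E → ℂ} {x : E}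

lemma AnalyticAt.conj (hf : AnalyticAt ℝ f x) : AnalyticAt ℝ (fun y => conj (f y)) x :=
  conjCLE.toContinuousLinearMap.analyticAt _ |>.comp hf

lemma AnalyticAt.ofReal {ρ : E → ℝ} (hρ : AnalyticAt ℝ ρ x) :
    AnalyticAt ℝ (fun y => (ρ y : ℂ)) x :=
  ofRealCLM.analyticAt _ |>.comp hρ

lemma AnalyticAt.fderiv_apply {F : Type*} [NormedAddCommGroup F] [NormedSpace ℝ F]
    [CompleteSpace F] {g : E → F} (hg : AnalyticAt ℝ g x) (v : E) :
    AnalyticAt ℝ (fun y => fderiv ℝ g y v) x :=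
  (ContinuousLinearMap.apply ℝ F v).analyticAt _ |>.comp hg.fderiv

end Analytic

section AnalyticWirtinger

variable {f : ℂ × (Fin c → ℝ) → ℂ} {p : ℂ × (Fin c → ℝ)}

lemma AnalyticAt.dZ (hf : AnalyticAt ℝ f p) : AnalyticAt ℝ (dZ f) p :=
  ((hf.fderiv_apply _).sub (analyticAt_const.mul (hf.fderiv_apply _))).div analyticAt_const
    two_ne_zero

lemma AnalyticAt.dZbar (hf : AnalyticAt ℝ f p) : AnalyticAt ℝ (dZbar f) p :=
  ((hf.fderiv_apply _).add (analyticAt_const.mul (hf.fderiv_apply _))).div analyticAt_const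
    two_ne_zero

lemma AnalyticAt.dU (j : Fin c) (hf : AnalyticAt ℝ f p) : AnalyticAt ℝ (dU j f) p :=
  hf.fderiv_apply _

end AnalyticWirtinger

section FstMulAnalytic

variable {f g : ℂ × (Fin c → ℝ) → ℂ} {p : ℂ × (Fin c → ℝ)}

lemma dZ_eventuallyEq_of_fst_mul_conj_fst_mul (hg : AnalyticAt ℝ g p)
    (hf : f =ᶠ[𝓝 p] fun q => q.1 * conj q.1 * g q) :
    dZ f =ᶠ[𝓝 p] fun q => conj q.1 * dZ (fun q' => q'.1 * g q') q := by
  have hf' : f =ᶠ[𝓝 p] fun q => conj q.1 * (q.1 * g q) := hf.mono fun q hq => by rw [hq]; ring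
  filter_upwards [hf'.dZ, (analyticAt_fst.fun_mul hg).eventually_analyticAt] with q hq hgq
  rw [hq, dZ_conj_fst_mul hgq.differentiableAt]

lemma dU_eventuallyEq_of_fst_mul_conj_fst_mul (k : Fin c) (hg : AnalyticAt ℝ g p)
    (hf : f =ᶠ[𝓝 p] fun q => q.1 * conj q.1 * g q) :
    dU k f =ᶠ[𝓝 p] fun q => q.1 * conj q.1 * dU k g q := by
  filter_upwards [eventually_eventually_nhds.mpr hf, hg.eventually_analyticAt] with q hq hgq
  rw [dU_congr k hq, dU_fst_mul_conj_fst_mul k hgq.differentiableAt]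

lemma dZ_dZ_fst_mul_zero (hg : AnalyticAt ℝ g 0) :
    dZ (dZ fun q => q.1 * g q) 0 = 2 * dZ g 0 := by
  rw [dZ_congr (dZ_fst_mul_eventuallyEq hg),
    dZ_add hg.differentiableAt (differentiableAt_fst.fun_mul hg.dZ.differentiableAt),
    dZ_fst_mul hg.dZ.differentiableAt]
  simp; ring

lemma dZbar_dZ_fst_mul_zero (hg : AnalyticAt ℝ g 0) :
    dZbar (dZ fun q => q.1 * g q) 0 = dZbar g 0 := by
  rw [dZbar_congr (dZ_fst_mul_eventuallyEq hg),
    dZbar_add hg.differentiableAt (differentiableAt_fst.fun_mul hg.dZ.differentiableAt),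
    dZbar_fst_mul hg.dZ.differentiableAt]
  simp

lemma dZ_dZbar_conj_fst_mul_zero (hg : AnalyticAt ℝ g 0) :
    dZ (dZbar fun q => conj q.1 * g q) 0 = dZ g 0 := by
  rw [dZ_congr (dZbar_conj_fst_mul_eventuallyEq hg),
    dZ_add hg.differentiableAt (differentiableAt_conj_fst.fun_mul hg.dZbar.differentiableAt),
    dZ_conj_fst_mul hg.dZbar.differentiableAt]
  simp

end FstMulAnalytic

section MatrixInverse

open Matrix

variable {E : Type*} [NormedAddCommGroup E] [NormedSpace ℝ E] {x : E}
  {n : Type*} [Fintype n] [DecidableEq n] {H : E → Matrix n n ℂ} {s : E → n → ℂ}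

lemma AnalyticAt.matrix_det (hH : ∀ i j, AnalyticAt ℝ (fun y => H y i j) x) :
    AnalyticAt ℝ (fun y => (H y).det) x := by
  simp only [Matrix.det_apply']
  exact Finset.analyticAt_fun_sum _ fun σ _ =>
    analyticAt_const.mul (Finset.analyticAt_fun_prod _ fun i _ => hH _ _)

lemma AnalyticAt.matrix_inv (hH : ∀ i j, AnalyticAt ℝ (fun y => H y i j) x)
    (hdet : (H x).det ≠ 0) (i j : n) : AnalyticAt ℝ (fun y => (H y)⁻¹ i j) x := by
  have hadj : AnalyticAt ℝ (fun y => (H y).adjugate i j) x := by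
    simp only [Matrix.adjugate_apply]
    refine AnalyticAt.matrix_det fun k l => ?_
    simp only [Matrix.updateRow_apply]
    split_ifs
    exacts [analyticAt_const, hH k l]
  simp only [Matrix.inv_def, Ring.inverse_eq_inv', Matrix.smul_apply, smul_eq_mul]
  exact ((AnalyticAt.matrix_det hH).inv hdet).mul hadj

lemma AnalyticAt.matrix_inv_mulVec (hH : ∀ i j, AnalyticAt ℝ (fun y => H y i j) x)
    (hs : ∀ i, AnalyticAt ℝ (fun y => s y i) x)
    (hdet : (H x).det ≠ 0) (i : n) : AnalyticAt ℝ (fun y => ((H y)⁻¹ *ᵥ s y) i) x := by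
  simp only [Matrix.mulVec, dotProduct]
  exact Finset.analyticAt_fun_sum _ fun j _ => (AnalyticAt.matrix_inv hH hdet i j).mul (hs j)

lemma fderiv_inv_mulVec_apply (hH : ∀ i j, AnalyticAt ℝ (fun y => H y i j) x)
    (hs : ∀ i, AnalyticAt ℝ (fun y => s y i) x) (hdet : (H x).det ≠ 0)
    (hH' : ∀ i j, fderiv ℝ (fun y => H y i j) x = 0) (v : E) (i : n) :
    fderiv ℝ (fun y => ((H y)⁻¹ *ᵥ s y) i) x v =
      ((H x)⁻¹ *ᵥ fun k => fderiv ℝ (fun y => s y k) x v) i := by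
  -- differentiate `H *ᵥ (H⁻¹ *ᵥ s) = s`, which holds near `x`; the terms with `DH` vanish
  set G : n → E → ℂ := fun k y => ((H y)⁻¹ *ᵥ s y) k
  have hG : ∀ k, DifferentiableAt ℝ (G k) x := fun k =>
    (AnalyticAt.matrix_inv_mulVec hH hs hdet k).differentiableAt
  have hHG : ∀ k, (fun y => ∑ l, H y k l * G l y) =ᶠ[𝓝 x] fun y => s y k := by
    intro k
    filter_upwards [(AnalyticAt.matrix_det hH).continuousAt.eventually_ne hdet] with y hy
    change (H y *ᵥ ((H y)⁻¹ *ᵥ s y)) k = s y k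
    rw [mulVec_mulVec, mul_nonsing_inv _ (isUnit_iff_ne_zero.mpr hy), one_mulVec]
  have hDG : (H x *ᵥ fun k => fderiv ℝ (G k) x v) =
      fun k => fderiv ℝ (fun y => s y k) x v := by
    funext k
    rw [← (hHG k).fderiv_eq, fderiv_fun_sum fun l _ => (hH k l).differentiableAt.fun_mul (hG l),
      _root_.sum_apply]
    refine Finset.sum_congr rfl fun l _ => ?_
    rw [fderiv_fun_mul (hH k l).differentiableAt (hG l), hH']
    simp
  rw [← hDG, mulVec_mulVec, nonsing_inv_mul _ (isUnit_iff_ne_zero.mpr hdet), one_mulVec]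

end MatrixInverse

section WirtingerInvMulVec

open Matrix

variable {p : ℂ × (Fin c → ℝ)} {n : Type*} [Fintype n] [DecidableEq n]
  {H : ℂ × (Fin c → ℝ) → Matrix n n ℂ} {s : ℂ × (Fin c → ℝ) → n → ℂ}

lemma dZ_inv_mulVec_apply (hH : ∀ i j, AnalyticAt ℝ (fun y => H y i j) p)
    (hs : ∀ i, AnalyticAt ℝ (fun y => s y i) p) (hdet : (H p).det ≠ 0)
    (hH' : ∀ i j, fderiv ℝ (fun y => H y i j) p = 0) (i : n) :
    dZ (fun y => ((H y)⁻¹ *ᵥ s y) i) p =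
      ((H p)⁻¹ *ᵥ fun k => dZ (fun y => s y k) p) i := by
  simp only [dZ]
  rw [fderiv_inv_mulVec_apply hH hs hdet hH', fderiv_inv_mulVec_apply hH hs hdet hH']
  simp only [mulVec, dotProduct, Finset.mul_sum, ← Finset.sum_sub_distrib, Finset.sum_div]
  exact Finset.sum_congr rfl fun _ _ => by ring

lemma dZbar_inv_mulVec_apply (hH : ∀ i j, AnalyticAt ℝ (fun y => H y i j) p)
    (hs : ∀ i, AnalyticAt ℝ (fun y => s y i) p) (hdet : (H p).det ≠ 0)
    (hH' : ∀ i j, fderiv ℝ (fun y => H y i j) p = 0) (i : n) :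
    dZbar (fun y => ((H y)⁻¹ *ᵥ s y) i) p =
      ((H p)⁻¹ *ᵥ fun k => dZbar (fun y => s y k) p) i := by
  simp only [dZbar]
  rw [fderiv_inv_mulVec_apply hH hs hdet hH', fderiv_inv_mulVec_apply hH hs hdet hH']
  simp only [mulVec, dotProduct, Finset.mul_sum, ← Finset.sum_add_distrib, Finset.sum_div]
  exact Finset.sum_congr rfl fun _ _ => by ring

end WirtingerInvMulVec

section CoefficientsAtPoint

variable {φ : ℂ × (Fin c → ℝ) → (Fin c → ℝ)} {f : ℂ × (Fin c → ℝ) → ℂ}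
  {p : ℂ × (Fin c → ℝ)}

lemma opL_apply_of_coefA_eq_zero (h : coefA φ p = 0) (f : ℂ × (Fin c → ℝ) → ℂ) :
    opL φ f p = dZ f p := by
  simp [opL, h]

lemma opLbar_apply_of_coefA_eq_zero (h : coefA φ p = 0) (f : ℂ × (Fin c → ℝ) → ℂ) :
    opLbar φ f p = dZbar f p := by
  simp [opLbar, h]

lemma coefB_apply_of_coefA_eq_zero (h : coefA φ p = 0) (j : Fin c) :
    coefB φ j p = dZ (fun q => conj (coefA φ q j)) p - dZbar (fun q => coefA φ q j) p := by
  rw [coefB, opL_apply_of_coefA_eq_zero h, opLbar_apply_of_coefA_eq_zero h]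

lemma coefM_apply_of_coefA_eq_zero (h : coefA φ p = 0)
    (hu : ∀ j k, dU k (fun q => coefA φ q j) p = 0) (j : Fin c) :
    coefM φ j p = dZ (coefB φ j) p := by
  simp [coefM, opL_apply_of_coefA_eq_zero h, hu]

lemma AnalyticAt.opL (hA : ∀ k, AnalyticAt ℝ (fun q => coefA φ q k) p)
    (hf : AnalyticAt ℝ f p) : AnalyticAt ℝ (opL φ f) p :=
  hf.dZ.add (Finset.analyticAt_fun_sum _ fun k _ => (hA k).fun_mul (hf.dU k))

lemma AnalyticAt.opLbar (hA : ∀ k, AnalyticAt ℝ (fun q => coefA φ q k) p)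
    (hf : AnalyticAt ℝ f p) : AnalyticAt ℝ (opLbar φ f) p :=
  hf.dZbar.add (Finset.analyticAt_fun_sum _ fun k _ => (hA k).conj.mul (hf.dU k))

lemma dZ_opL_of_coefA_eq_zero (hA : ∀ k, AnalyticAt ℝ (fun q => coefA φ q k) p)
    (hf : AnalyticAt ℝ f p) (h : coefA φ p = 0) (hfu : ∀ k, dU k f p = 0) :
    dZ (opL φ f) p = dZ (dZ f) p := by
  unfold opL
  rw [dZ_add hf.dZ.differentiableAt (Finset.analyticAt_fun_sum _ fun k _ =>
      (hA k).fun_mul (hf.dU k)).differentiableAt,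
    dZ_sum _ fun k _ => ((hA k).fun_mul (hf.dU k)).differentiableAt]
  simp [dZ_mul (hA _).differentiableAt (hf.dU _).differentiableAt, h, hfu]

lemma dZ_opLbar_of_coefA_eq_zero (hA : ∀ k, AnalyticAt ℝ (fun q => coefA φ q k) p)
    (hf : AnalyticAt ℝ f p) (h : coefA φ p = 0) (hfu : ∀ k, dU k f p = 0) :
    dZ (opLbar φ f) p = dZ (dZbar f) p := by
  unfold opLbar
  rw [dZ_add hf.dZbar.differentiableAt (Finset.analyticAt_fun_sum _ fun k _ =>
      (hA k).conj.fun_mul (hf.dU k)).differentiableAt,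
    dZ_sum _ fun k _ => ((hA k).conj.fun_mul (hf.dU k)).differentiableAt]
  simp [dZ_mul (hA _).conj.differentiableAt (hf.dU _).differentiableAt, h, hfu]

lemma dZ_coefB_of_coefA_eq_zero (hA : ∀ k, AnalyticAt ℝ (fun q => coefA φ q k) p)
    (h : coefA φ p = 0) (j : Fin c) (hu : ∀ k, dU k (fun q => coefA φ q j) p = 0) :
    dZ (coefB φ j) p =
      dZ (dZ fun q => conj (coefA φ q j)) p - dZ (dZbar fun q => coefA φ q j) p := by
  have hAj := hA j
  unfold coefB
  rw [dZ_sub (hAj.conj.opL hA).differentiableAt (hAj.opLbar hA).differentiableAt,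
    dZ_opL_of_coefA_eq_zero hA hAj.conj h fun k => by rw [dU_conj k hAj.differentiableAt, hu k,
      map_zero],
    dZ_opLbar_of_coefA_eq_zero hA hAj h hu]

end CoefficientsAtPoint

structure IsConjMul (φ : ℂ × (Fin c → ℝ) → (Fin c → ℝ))
    (G : Fin c → ℂ × (Fin c → ℝ) → ℂ) : Prop where
  analyticAt : ∀ j, AnalyticAt ℝ (G j) 0
  eventuallyEq : ∀ j, (fun q => coefA φ q j) =ᶠ[𝓝 0] fun q => conj q.1 * G j q

namespace IsConjMul

variable {φ : ℂ × (Fin c → ℝ) → (Fin c → ℝ)} {G : Fin c → ℂ × (Fin c → ℝ) → ℂ}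

lemma coefA_zero (h : IsConjMul φ G) : coefA φ 0 = 0 :=
  funext fun j => by simpa using (h.eventuallyEq j).self_of_nhds

lemma analyticAt_coefA (h : IsConjMul φ G) (j : Fin c) :
    AnalyticAt ℝ (fun q => coefA φ q j) 0 :=
  (analyticAt_fst.conj.mul (h.analyticAt j)).congr (h.eventuallyEq j).symm

lemma dU_coefA_zero (h : IsConjMul φ G) (j k : Fin c) : dU k (fun q => coefA φ q j) 0 = 0 := by
  simp [dU_congr k (h.eventuallyEq j), dU_conj_fst_mul k (h.analyticAt j).differentiableAt]

lemma conj_coefA_eventuallyEq (h : IsConjMul φ G) (j : Fin c) :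
    (fun q => conj (coefA φ q j)) =ᶠ[𝓝 0] fun q => q.1 * conj (G j q) :=
  (h.eventuallyEq j).mono fun q hq => by simp [hq]

lemma coefB_zero (h : IsConjMul φ G) (j : Fin c) : coefB φ j 0 = conj (G j 0) - G j 0 := by
  rw [coefB_apply_of_coefA_eq_zero h.coefA_zero, dZ_congr (h.conj_coefA_eventuallyEq j),
    dZbar_congr (h.eventuallyEq j), dZ_fst_mul (h.analyticAt j).conj.differentiableAt,
    dZbar_conj_fst_mul (h.analyticAt j).differentiableAt]
  simp

lemma coefM_zero (h : IsConjMul φ G) (j : Fin c) :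
    coefM φ j 0 = 2 * conj (dZbar (G j) 0) - dZ (G j) 0 := by
  have hGj := h.analyticAt j
  have hdZ : dZ (dZ fun q => conj (coefA φ q j)) 0 = 2 * conj (dZbar (G j) 0) := by
    rw [dZ_congr (h.conj_coefA_eventuallyEq j).dZ, dZ_dZ_fst_mul_zero hGj.conj,
      dZ_conj hGj.differentiableAt]
  have hdZbar : dZ (dZbar fun q => coefA φ q j) 0 = dZ (G j) 0 := by
    rw [dZ_congr (h.eventuallyEq j).dZbar, dZ_dZbar_conj_fst_mul_zero hGj]
  rw [coefM_apply_of_coefA_eq_zero h.coefA_zero h.dU_coefA_zero,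
    dZ_coefB_of_coefA_eq_zero h.analyticAt_coefA h.coefA_zero j (h.dU_coefA_zero j), hdZ, hdZbar]

end IsConjMul

structure IsNormSqMul (φ : ℂ × (Fin c → ℝ) → (Fin c → ℝ))
    (r : Fin c → ℂ × (Fin c → ℝ) → ℂ) : Prop where
  analyticAt : ∀ j, AnalyticAt ℝ (r j) 0
  eventuallyEq : ∀ j,
    (fun q => ((φ q j : ℝ) : ℂ)) =ᶠ[𝓝 0] fun q => q.1 * conj q.1 * r j q

section NormSqMul

open Matrix

def crMatrix (φ : ℂ × (Fin c → ℝ) → (Fin c → ℝ)) (q : ℂ × (Fin c → ℝ)) :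
    Matrix (Fin c) (Fin c) ℂ :=
  I • (1 : Matrix (Fin c) (Fin c) ℂ) +
    Matrix.of fun j k => dU k (fun q => ((φ q j : ℝ) : ℂ)) q

/-- When `φ_j = z·z̄·r_j`, `φ_z = z̄·∂(z r)/∂z`, so `A = z̄·G` with this `G`. -/
def conjFactor (φ : ℂ × (Fin c → ℝ) → (Fin c → ℝ))
    (r : Fin c → ℂ × (Fin c → ℝ) → ℂ) (j : Fin c) (q : ℂ × (Fin c → ℝ)) : ℂ :=
  ((crMatrix φ q)⁻¹ *ᵥ fun k => -dZ (fun q' => q'.1 * r k q') q) j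

lemma coefA_eq_neg_crMatrix_inv_mulVec (φ : ℂ × (Fin c → ℝ) → (Fin c → ℝ))
    (q : ℂ × (Fin c → ℝ)) :
    coefA φ q = -((crMatrix φ q)⁻¹ *ᵥ fun j => dZ (fun q' => ((φ q' j : ℝ) : ℂ)) q) :=
  rfl

lemma inv_I_smul_one_mulVec (v : Fin c → ℂ) :
    (I • (1 : Matrix (Fin c) (Fin c) ℂ))⁻¹ *ᵥ v = -I • v := by
  have h : (-I • (1 : Matrix (Fin c) (Fin c) ℂ)) * (I • 1) = 1 := by
    rw [smul_mul_smul_comm, one_mul, neg_mul, I_mul_I, neg_neg, one_smul]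
  rw [inv_eq_left_inv h, smul_mulVec, one_mulVec]

lemma det_I_smul_one_ne_zero : (I • (1 : Matrix (Fin c) (Fin c) ℂ)).det ≠ 0 := by
  simp

end NormSqMul

namespace IsNormSqMul

open Matrix

variable {φ : ℂ × (Fin c → ℝ) → (Fin c → ℝ)} {r : Fin c → ℂ × (Fin c → ℝ) → ℂ}

lemma coefA_eventuallyEq (h : IsNormSqMul φ r) (j : Fin c) :
    (fun q => coefA φ q j) =ᶠ[𝓝 0] fun q => conj q.1 * conjFactor φ r j q := by
  have hdZφ : ∀ᶠ q in 𝓝 0, ∀ k, dZ (fun q' => ((φ q' k : ℝ) : ℂ)) q =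
      conj q.1 * dZ (fun q' => q'.1 * r k q') q :=
    eventually_all.mpr fun k => dZ_eventuallyEq_of_fst_mul_conj_fst_mul (h.analyticAt k)
      (h.eventuallyEq k)
  filter_upwards [hdZφ] with q hq
  have hvec : (fun k => dZ (fun q' => ((φ q' k : ℝ) : ℂ)) q) =
      -(conj q.1 • fun k => -dZ (fun q' => q'.1 * r k q') q) := by
    funext k; simp [hq k]
  rw [coefA_eq_neg_crMatrix_inv_mulVec, hvec, mulVec_neg, neg_neg, mulVec_smul]
  rfl

lemma analyticAt_crMatrix_apply (h : IsNormSqMul φ r) (j k : Fin c) :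
    AnalyticAt ℝ (fun q => crMatrix φ q j k) 0 :=
  analyticAt_const.add
    (((analyticAt_fst.fun_mul analyticAt_fst.conj).fun_mul (h.analyticAt j)).congr
      (h.eventuallyEq j).symm |>.dU k)

lemma fderiv_crMatrix_apply_zero (h : IsNormSqMul φ r) (j k : Fin c) :
    fderiv ℝ (fun q => crMatrix φ q j k) 0 = 0 := by
  simp only [crMatrix, Matrix.add_apply, Matrix.smul_apply, of_apply]
  rw [fderiv_const_add,
    (dU_eventuallyEq_of_fst_mul_conj_fst_mul k (h.analyticAt j) (h.eventuallyEq j)).fderiv_eq,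
    fderiv_fst_mul_conj_fst_mul_zero ((h.analyticAt j).dU k).differentiableAt]

lemma crMatrix_zero (h : IsNormSqMul φ r) :
    crMatrix φ 0 = I • (1 : Matrix (Fin c) (Fin c) ℂ) := by
  ext j k
  simp [crMatrix,
    (dU_eventuallyEq_of_fst_mul_conj_fst_mul k (h.analyticAt j) (h.eventuallyEq j)).self_of_nhds]

lemma det_crMatrix_zero_ne_zero (h : IsNormSqMul φ r) : (crMatrix φ 0).det ≠ 0 :=
  h.crMatrix_zero ▸ det_I_smul_one_ne_zero

lemma analyticAt_neg_dZ_fst_mul (h : IsNormSqMul φ r) (k : Fin c) :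
    AnalyticAt ℝ (fun q => -dZ (fun q' => q'.1 * r k q') q) 0 :=
  (analyticAt_fst.fun_mul (h.analyticAt k)).dZ.neg

lemma analyticAt_conjFactor (h : IsNormSqMul φ r) (j : Fin c) :
    AnalyticAt ℝ (conjFactor φ r j) 0 :=
  AnalyticAt.matrix_inv_mulVec h.analyticAt_crMatrix_apply h.analyticAt_neg_dZ_fst_mul
    h.det_crMatrix_zero_ne_zero j

lemma conjFactor_zero (h : IsNormSqMul φ r) (j : Fin c) : conjFactor φ r j 0 = I * r j 0 := by
  simp [conjFactor, h.crMatrix_zero, inv_I_smul_one_mulVec,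
    dZ_fst_mul (h.analyticAt j).differentiableAt]

lemma dZ_conjFactor_zero (h : IsNormSqMul φ r) (j : Fin c) :
    dZ (conjFactor φ r j) 0 = 2 * I * dZ (r j) 0 := by
  unfold conjFactor
  rw [dZ_inv_mulVec_apply h.analyticAt_crMatrix_apply h.analyticAt_neg_dZ_fst_mul
    h.det_crMatrix_zero_ne_zero h.fderiv_crMatrix_apply_zero]
  simp [h.crMatrix_zero, inv_I_smul_one_mulVec, dZ_neg, dZ_dZ_fst_mul_zero (h.analyticAt j)]
  ring

lemma dZbar_conjFactor_zero (h : IsNormSqMul φ r) (j : Fin c) :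
    dZbar (conjFactor φ r j) 0 = I * dZbar (r j) 0 := by
  unfold conjFactor
  rw [dZbar_inv_mulVec_apply h.analyticAt_crMatrix_apply h.analyticAt_neg_dZ_fst_mul
    h.det_crMatrix_zero_ne_zero h.fderiv_crMatrix_apply_zero]
  simp [h.crMatrix_zero, inv_I_smul_one_mulVec, dZbar_neg,
    dZbar_dZ_fst_mul_zero (h.analyticAt j)]

lemma isConjMul (h : IsNormSqMul φ r) : IsConjMul φ (conjFactor φ r) :=
  ⟨h.analyticAt_conjFactor, h.coefA_eventuallyEq⟩

theorem coefA_zero (h : IsNormSqMul φ r) : coefA φ 0 = 0 :=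
  h.isConjMul.coefA_zero

theorem coefB_zero (h : IsNormSqMul φ r) (j : Fin c) :
    coefB φ j 0 = -I * (r j 0 + conj (r j 0)) := by
  rw [h.isConjMul.coefB_zero, h.conjFactor_zero]
  simp; ring

theorem coefM_zero (h : IsNormSqMul φ r) (j : Fin c) :
    coefM φ j 0 = -2 * I * (dZ (r j) 0 + conj (dZbar (r j) 0)) := by
  rw [h.isConjMul.coefM_zero, h.dZ_conjFactor_zero, h.dZbar_conjFactor_zero]
  simp; ring

end IsNormSqMul

theorem stmt_19_general
    (φ : ℂ × (Fin 2 → ℝ) → (Fin 2 → ℝ))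
    (ρ₁ ρ₂ : ℂ × (Fin 2 → ℝ) → ℝ)
    (hρ₁ : AnalyticAt ℝ ρ₁ 0) (hρ₂ : AnalyticAt ℝ ρ₂ 0)
    (hρ₁0 : ρ₁ 0 = 0) (hρ₂0 : ρ₂ 0 = 0)
    (hρ₁z : fderiv ℝ ρ₁ 0 (1, 0) = 0) (hρ₁zbar : fderiv ℝ ρ₁ 0 (Complex.I, 0) = 0)
    (hρ₂z : fderiv ℝ ρ₂ 0 (1, 0) = 0) (hρ₂zbar : fderiv ℝ ρ₂ 0 (Complex.I, 0) = 0)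
    (hform : ∀ᶠ q in 𝓝 (0 : ℂ × (Fin 2 → ℝ)),
      ((φ q 0 : ℝ) : ℂ) = q.1 * conj q.1 * (1 + (ρ₁ q : ℂ)) ∧
      ((φ q 1 : ℝ) : ℂ) = q.1 ^ 2 * conj q.1 + q.1 * (conj q.1) ^ 2 +
        q.1 * conj q.1 * (ρ₂ q : ℂ)) :
    coefA φ 0 = 0 ∧
    coefB φ 0 0 = -2 * Complex.I ∧ coefB φ 1 0 = 0 ∧
    coefM φ 0 0 = 0 ∧ coefM φ 1 0 = -4 * Complex.I := by
  set r : Fin 2 → ℂ × (Fin 2 → ℝ) → ℂ :=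
    ![fun q => 1 + (ρ₁ q : ℂ), fun q => q.1 + conj q.1 + (ρ₂ q : ℂ)]
  have hr : IsNormSqMul φ r :=
    ⟨Fin.forall_fin_two.mpr ⟨analyticAt_const.add hρ₁.ofReal,
        (analyticAt_fst.add analyticAt_fst.conj).add hρ₂.ofReal⟩,
      Fin.forall_fin_two.mpr ⟨hform.mono fun _ h => h.1,
        hform.mono fun _ h => by simp [r, h.2]; ring⟩⟩
  have hz : DifferentiableAt ℝ (fun q : ℂ × (Fin 2 → ℝ) => q.1 + conj q.1) 0 :=
    differentiableAt_fst.add differentiableAt_conj_fst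
  have hdr : dZ (r 0) 0 = 0 ∧ dZbar (r 0) 0 = 0 ∧ dZ (r 1) 0 = 1 ∧ dZbar (r 1) 0 = 1 := by
    simp [r, dZ_add (differentiableAt_const _) hρ₁.ofReal.differentiableAt,
      dZbar_add (differentiableAt_const _) hρ₁.ofReal.differentiableAt,
      dZ_add hz hρ₂.ofReal.differentiableAt, dZbar_add hz hρ₂.ofReal.differentiableAt,
      dZ_add differentiableAt_fst differentiableAt_conj_fst,
      dZbar_add differentiableAt_fst differentiableAt_conj_fst,
      dZ_ofReal_eq_zero hρ₁.differentiableAt hρ₁z hρ₁zbar,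
      dZbar_ofReal_eq_zero hρ₁.differentiableAt hρ₁z hρ₁zbar,
      dZ_ofReal_eq_zero hρ₂.differentiableAt hρ₂z hρ₂zbar,
      dZbar_ofReal_eq_zero hρ₂.differentiableAt hρ₂z hρ₂zbar]
  refine ⟨hr.coefA_zero, ?_, ?_, ?_, ?_⟩
  · rw [hr.coefB_zero]; simp [r, hρ₁0]; ring
  · rw [hr.coefB_zero]; simp [r, hρ₂0]
  · rw [hr.coefM_zero, hdr.1, hdr.2.1]; simp
  · rw [hr.coefM_zero, hdr.2.2.1, hdr.2.2.2]; simp; ring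

/-- **Class II scholium.** If `φ = (φ₁, φ₂)` has the elementarily normalized class-II
form `φ₁ = z·conj z·(1 + ρ₁)`, `φ₂ = z²·conj z + z·(conj z)² + z·conj z·ρ₂` with
`ρ₁, ρ₂` real-valued real-analytic vanishing at `0` together with their `∂/∂z`- and
`∂/∂z̄`-derivatives, then `A(0) = 0` (so `L|₀ = ∂/∂z|₀`, `L̄|₀ = ∂/∂z̄|₀`),
`(B₁(0), B₂(0)) = (−2i, 0)` and `(M₁(0), M₂(0)) = (0, −4i)`; that is,
`[L, L̄]|₀ = −2i·∂/∂u₁|₀` and `[L, [L, L̄]]|₀ = −4i·∂/∂u₂|₀`. -/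
theorem stmt_19
    (φ : ℂ × (Fin 2 → ℝ) → (Fin 2 → ℝ))
    (hφ : AnalyticAt ℝ φ 0) (hφ0 : φ 0 = 0) (hDφ : fderiv ℝ φ 0 = 0)
    (ρ₁ ρ₂ : ℂ × (Fin 2 → ℝ) → ℝ)
    (hρ₁ : AnalyticAt ℝ ρ₁ 0) (hρ₂ : AnalyticAt ℝ ρ₂ 0)
    (hρ₁0 : ρ₁ 0 = 0) (hρ₂0 : ρ₂ 0 = 0)
    (hρ₁z : fderiv ℝ ρ₁ 0 (1, 0) = 0) (hρ₁zbar : fderiv ℝ ρ₁ 0 (Complex.I, 0) = 0)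
    (hρ₂z : fderiv ℝ ρ₂ 0 (1, 0) = 0) (hρ₂zbar : fderiv ℝ ρ₂ 0 (Complex.I, 0) = 0)
    (hform : ∀ᶠ q in 𝓝 (0 : ℂ × (Fin 2 → ℝ)),
      ((φ q 0 : ℝ) : ℂ) = q.1 * conj q.1 * (1 + (ρ₁ q : ℂ)) ∧
      ((φ q 1 : ℝ) : ℂ) = q.1 ^ 2 * conj q.1 + q.1 * (conj q.1) ^ 2 +
        q.1 * conj q.1 * (ρ₂ q : ℂ)) :
    coefA φ 0 = 0 ∧
    coefB φ 0 0 = -2 * Complex.I ∧ coefB φ 1 0 = 0 ∧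
    coefM φ 0 0 = 0 ∧ coefM φ 1 0 = -4 * Complex.I :=
  stmt_19_general φ ρ₁ ρ₂ hρ₁ hρ₂ hρ₁0 hρ₂0 hρ₁z hρ₁zbar hρ₂z hρ₂zbar hform
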